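/- Every point (h, j) ∈ R^2 with (h, j) ≠ (0, 0) is a regular value of the map F = (H, J) : R^4 → R^2 with H = q1 q2 − p1 p2 and J = (1/2)(q1^2 + p1^2) − (1/2)(q2^2 + p2^2); i.e., at every point x ∈ F^{-1}(h,j) the differential DF(x) has rank 2. -/

import Mathlib

/-!
Since `F 0 = 0`, a preimage point `x` of `v ≠ 0` is not the origin. The rows
`(q₂, -p₂, q₁, -p₁)` and `(q₁, p₁, -q₂, -p₂)` of the Jacobian `DF(x)` are orthogonal and both
have squared length `|x|²`, so `DF(x) DF(x)ᵀ = |x|² I` is invertible and `DF(x)ᵀ (DF(x) DF(x)ᵀ)⁻¹`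
is a right inverse of `DF(x)`.
-/

open Matrix

theorem Matrix.mulVec_surjective_of_isUnit_det_mul_transpose {m n R : Type*} [Fintype m]
    [DecidableEq m] [Fintype n] [CommRing R] (M : Matrix m n R) (h : IsUnit (M * Mᵀ).det) :
    Function.Surjective M.mulVec := fun t =>
  ⟨(Mᵀ * (M * Mᵀ)⁻¹) *ᵥ t, by
    rw [mulVec_mulVec, ← Matrix.mul_assoc, mul_nonsing_inv _ h, one_mulVec]⟩

noncomputable section

def focusFocusMap (x : Fin 4 → ℝ) : Fin 2 → ℝ :=
  ![x 0 * x 2 - x 1 * x 3, (1/2) * ((x 0)^2 + (x 1)^2) - (1/2) * ((x 2)^2 + (x 3)^2)]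

def focusFocusJacobian (x : Fin 4 → ℝ) : Matrix (Fin 2) (Fin 4) ℝ :=
  !![x 2, -x 3, x 0, -x 1; x 0, x 1, -x 2, -x 3]

theorem focusFocusMap_zero : focusFocusMap 0 = 0 := by
  ext i
  fin_cases i <;> simp [focusFocusMap]

theorem hasFDerivAt_focusFocusMap (x : Fin 4 → ℝ) :
    HasFDerivAt focusFocusMap (mulVecLin (focusFocusJacobian x)).toContinuousLinearMap x := by
  have hcoord (i : Fin 4) :
      HasFDerivAt (fun y : Fin 4 → ℝ => y i) (ContinuousLinearMap.proj i) x :=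
    hasFDerivAt_apply (𝕜 := ℝ) (F' := fun _ : Fin 4 => ℝ) i x
  rw [hasFDerivAt_pi']
  intro i
  fin_cases i
  · refine (((hcoord 0).mul (hcoord 2)).sub ((hcoord 1).mul (hcoord 3))).congr_fderiv ?_
    refine ContinuousLinearMap.ext fun y => ?_
    simp [focusFocusJacobian, dotProduct, Fin.sum_univ_four]
    ring
  · refine ((((hcoord 0).pow 2).add ((hcoord 1).pow 2)).const_mul (1/2 : ℝ) |>.sub
      ((((hcoord 2).pow 2).add ((hcoord 3).pow 2)).const_mul (1/2 : ℝ))).congr_fderiv ?_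
    refine ContinuousLinearMap.ext fun y => ?_
    simp [focusFocusJacobian, dotProduct, Fin.sum_univ_four]
    ring

theorem focusFocusJacobian_mul_transpose (x : Fin 4 → ℝ) :
    focusFocusJacobian x * (focusFocusJacobian x)ᵀ = (x ⬝ᵥ x) • 1 := by
  ext i j
  fin_cases i <;> fin_cases j <;>
    simp [focusFocusJacobian, mul_apply, dotProduct, Fin.sum_univ_four] <;> ring

theorem mulVec_focusFocusJacobian_surjective {x : Fin 4 → ℝ} (hx : x ≠ 0) :
    Function.Surjective (focusFocusJacobian x).mulVec := by
  refine mulVec_surjective_of_isUnit_det_mul_transpose _ ?_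
  rw [focusFocusJacobian_mul_transpose, det_smul, det_one, mul_one, isUnit_iff_ne_zero]
  exact pow_ne_zero _ (dotProduct_self_eq_zero.not.mpr hx)

end

/-- Every (h, j) ≠ (0,0) is a regular value of F = (H, J),
H = q1 q2 − p1 p2, J = ½(q1²+p1²) − ½(q2²+p2²): at every preimage point the
differential DF(x) is surjective (has rank 2).
Coordinates on ℝ⁴ are (q1, p1, q2, p2) = (x 0, x 1, x 2, x 3). -/
theorem focus_focus_regular_values
    (F : (Fin 4 → ℝ) → (Fin 2 → ℝ))
    (hF : ∀ x, F x = ![x 0 * x 2 - x 1 * x 3,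
      (1/2) * ((x 0)^2 + (x 1)^2) - (1/2) * ((x 2)^2 + (x 3)^2)])
    (v : Fin 2 → ℝ) (hv : v ≠ 0) :
    ∀ x : Fin 4 → ℝ, F x = v → Function.Surjective (fderiv ℝ F x) := by
  obtain rfl : F = focusFocusMap := funext hF
  intro x hx
  have hx0 : x ≠ 0 := by
    rintro rfl
    exact hv (hx.symm.trans focusFocusMap_zero)
  rw [(hasFDerivAt_focusFocusMap x).fderiv]
  exact mulVec_focusFocusJacobian_surjective hx0
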